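/- arXiv:0806.0791 — 2 statements merged into one kernel-verified Lean document; each statement's English description precedes it below -/
import Mathlib

section
/- For β ≥ 2, the equation β = g(ρ) has a unique solution ρ in the interval (0, 1/2], where g(ρ) = (1/(1-2ρ))·ln((1-ρ)/ρ) for ρ ≠ 1/2 and g(1/2) = 2. -/
/-!
Write `L = logRatio`, so `L ρ = log ((1 - ρ) / ρ)` and `L (1/2) = 0`. For `ρ ≠ 1/2`, `g ρ` is `-1/2`
times the slope of the secant of `L` between `ρ` and `1/2`, while `g (1/2) = 2 = -L'(1/2) / 2`.
As `L' ρ = -1 / (ρ (1 - ρ))` increases on `(0, 1/2]`, `L` is strictly convex there, so these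
slopes increase strictly and stay below `L'(1/2)`: `g` is strictly decreasing and continuous on
`(0, 1/2]`. Since `L ((1 + e^β)⁻¹) = β` gives `g ((1 + e^β)⁻¹) ≥ β ≥ 2 = g (1/2)`, the
intermediate value theorem provides the solution, and strict monotonicity its uniqueness.
-/

noncomputable def g (ρ : ℝ) : ℝ :=
  if ρ = 1/2 then 2 else (1 / (1 - 2*ρ)) * Real.log ((1 - ρ) / ρ)

open Set Filter Topology

noncomputable def logRatio (ρ : ℝ) : ℝ := Real.log ((1 - ρ) / ρ)

lemma logRatio_half : logRatio (1/2) = 0 := by norm_num [logRatio]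

lemma hasDerivAt_logRatio {ρ : ℝ} (h0 : 0 < ρ) (h1 : ρ < 1) :
    HasDerivAt logRatio (-(ρ * (1 - ρ))⁻¹) ρ := by
  have hq : HasDerivAt (fun x => (1 - x) / x) (-(ρ ^ 2)⁻¹) ρ := by
    refine (((hasDerivAt_id' ρ).const_sub 1).div (hasDerivAt_id' ρ) h0.ne').congr_deriv ?_
    ring
  exact (hq.log (div_pos (by linarith) h0).ne').congr_deriv (by field_simp)

lemma strictConvexOn_logRatio : StrictConvexOn ℝ (Ioc 0 (1/2)) logRatio := by
  refine StrictMonoOn.strictConvexOn_of_deriv (convex_Ioc 0 (1/2)) ?_ ?_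
  · intro ρ hρ
    exact (hasDerivAt_logRatio hρ.1 (by linarith [hρ.2])).continuousAt.continuousWithinAt
  · rw [interior_Ioc]
    intro a ha b hb hab
    rw [(hasDerivAt_logRatio ha.1 (by linarith [ha.2])).deriv,
      (hasDerivAt_logRatio hb.1 (by linarith [hb.2])).deriv, neg_lt_neg_iff]
    have ha' : 0 < a * (1 - a) := mul_pos ha.1 (by linarith [ha.2])
    exact inv_strictAnti₀ ha' (by nlinarith [hb.2])

lemma g_half : g (1/2) = 2 := by simp [g]

lemma g_eq_slope {ρ : ℝ} (hρ : ρ ≠ 1/2) : g ρ = -(1/2) * slope logRatio ρ (1/2) := by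
  have h1 : 1 - 2 * ρ ≠ 0 := fun h => hρ (by linarith)
  have h2 : 1/2 - ρ ≠ 0 := fun h => hρ (by linarith)
  rw [g, if_neg hρ, slope_def_field, logRatio_half, logRatio]
  field_simp
  ring

lemma strictAntiOn_g : StrictAntiOn g (Ioc 0 (1/2)) := by
  have hhalf : (1/2 : ℝ) ∈ Ioc 0 (1/2) := ⟨by norm_num, le_rfl⟩
  intro a ha b hb hab
  have ha' : a ≠ 1/2 := (hab.trans_le hb.2).ne
  rw [g_eq_slope ha']
  rcases hb.2.lt_or_eq with hb' | rfl
  · have := strictConvexOn_logRatio.secant_strict_mono hhalf ha hb ha' hb'.ne hab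
    rw [g_eq_slope hb'.ne, slope_comm, slope_def_field, slope_comm, slope_def_field]
    linarith
  · have := strictConvexOn_logRatio.slope_lt_of_hasDerivAt ha hhalf hab
      (hasDerivAt_logRatio (by norm_num) (by norm_num))
    rw [g_half]
    norm_num at this
    linarith

lemma tendsto_g_nhdsLT_half : Tendsto g (𝓝[<] (1/2)) (𝓝 2) := by
  have hslope := hasDerivAt_iff_tendsto_slope.1
    (hasDerivAt_logRatio (ρ := 1/2) (by norm_num) (by norm_num))
  have := ((hslope.mono_left (nhdsWithin_mono _ fun x hx => ne_of_lt hx)).const_mul (-(1/2)))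
  norm_num at this
  refine this.congr' ?_
  filter_upwards [self_mem_nhdsWithin] with ρ hρ
  rw [g_eq_slope (ne_of_lt hρ), slope_comm]
  ring

lemma continuousOn_g : ContinuousOn g (Ioc 0 (1/2)) := by
  intro ρ hρ
  rcases hρ.2.lt_or_eq with h | rfl
  · have h1 : 1 - 2 * ρ ≠ 0 := by linarith
    have h2 : (1 - ρ) / ρ ≠ 0 := (div_pos (by linarith) hρ.1).ne'
    have h3 : ρ ≠ 0 := hρ.1.ne'
    have hformula : ContinuousAt (fun x => 1 / (1 - 2 * x) * Real.log ((1 - x) / x)) ρ := by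
      fun_prop (disch := assumption)
    refine (hformula.congr ?_).continuousWithinAt
    filter_upwards [eventually_ne_nhds h.ne] with x hx
    rw [g, if_neg hx]
  · have : ContinuousWithinAt g (Iio (1/2)) (1/2) := by
      rw [ContinuousWithinAt, g_half]
      exact tendsto_g_nhdsLT_half
    exact (continuousWithinAt_Iio_iff_Iic.1 this).mono fun x hx => hx.2

lemma exists_le_g {β : ℝ} (hβ : 0 < β) : ∃ ρ ∈ Ioc (0:ℝ) (1/2), β ≤ g ρ := by
  set ρ := (1 + Real.exp β)⁻¹ with hρ_def
  have hexp : 1 < Real.exp β := Real.one_lt_exp_iff.2 hβ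
  have hρ0 : 0 < ρ := by positivity
  have hρ : ρ < 1/2 := by rw [hρ_def, inv_lt_comm₀ (by positivity) (by norm_num)]; linarith
  have hL : Real.log ((1 - ρ) / ρ) = β := by
    rw [show (1 - ρ) / ρ = Real.exp β by rw [hρ_def]; field_simp; ring, Real.log_exp]
  refine ⟨ρ, ⟨hρ0, hρ.le⟩, ?_⟩
  rw [g, if_neg hρ.ne, hL]
  exact le_mul_of_one_le_left hβ.le (one_le_one_div (by linarith) (by linarith))

/-- For `β ≥ 2`, the equation `β = g ρ` has a unique solution `ρ ∈ (0, 1/2]`. -/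
theorem stmt_0 (β : ℝ) (hβ : 2 ≤ β) :
    ∃! ρ : ℝ, ρ ∈ Set.Ioc (0:ℝ) (1/2) ∧ g ρ = β := by
  obtain ⟨ρ₀, hρ₀, hβρ₀⟩ := exists_le_g (by linarith : 0 < β)
  obtain ⟨ρ, hρ, hgρ⟩ : β ∈ g '' Icc ρ₀ (1/2) :=
    intermediate_value_Icc' hρ₀.2 (continuousOn_g.mono (Icc_subset_Ioc hρ₀.1 le_rfl))
      ⟨by rwa [g_half], hβρ₀⟩
  have hρ' : ρ ∈ Ioc 0 (1/2) := ⟨hρ₀.1.trans_le hρ.1, hρ.2⟩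
  exact ⟨ρ, ⟨hρ', hgρ⟩, fun σ hσ => strictAntiOn_g.injOn hσ.1 hρ' (hσ.2.trans hgρ.symm)⟩
end

section
/- For β > 2, the long-cycle density ρ_β^long(ρ) = ρ - ρ_β·exp(β(ρ-ρ_β)) on [ρ_β, 1-ρ_β] is nonnegative, vanishes at ρ = ρ_β, and is not symmetric about ρ = 1/2 (i.e. there exists ρ ∈ [ρ_β, 1-ρ_β] with ρ_β^long(ρ) ≠ ρ_β^long(1-ρ)). -/
/-!
Write `g ρ = ρ_β exp (β (ρ - ρ_β))`. The defining equation of `ρ_β` says exactly that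
`g (1 - ρ_β) = 1 - ρ_β`, and trivially `g ρ_β = ρ_β`. Since `g` is convex, the long-cycle density
`ρ - g ρ` is a concave function vanishing at both ends of `[ρ_β, 1 - ρ_β]`, hence nonnegative there.
Asymmetry is checked at the midpoint of `ρ_β` and `1/2`: with `x = exp (β (1/2 - ρ_β) / 2)` one has
`ρ_β x⁴ = 1 - ρ_β`, and the two values differ by a polynomial in `x` with the sign of `(x - 1)²`.
-/

open Real Set

/-- `ρ_β^long(ρ)`, with `a` in the role of `ρ_β`. -/
noncomputable def longDensity (β a ρ : ℝ) : ℝ := ρ - a * exp (β * (ρ - a))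

theorem concaveOn_longDensity (β : ℝ) {a : ℝ} (ha : 0 ≤ a) :
    ConcaveOn ℝ univ (longDensity β a) := by
  have hexp : ConvexOn ℝ univ fun ρ => exp (β * ρ) :=
    convexOn_exp.comp_linearMap (LinearMap.mul ℝ ℝ β)
  have hconv : ConvexOn ℝ univ fun ρ => a * exp (β * (ρ - a)) := by
    have hfun : (fun ρ => a * exp (β * (ρ - a))) = fun ρ => (a * exp (-(β * a))) • exp (β * ρ) := by
      funext ρ
      rw [smul_eq_mul, mul_assoc, ← exp_add]
      ring_nf
    exact hfun ▸ hexp.smul (by positivity)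
  exact (concaveOn_id convex_univ).sub hconv

theorem longDensity_self (β a : ℝ) : longDensity β a a = 0 := by
  simp [longDensity]

theorem longDensity_one_sub_self {β a : ℝ} (h : a * exp (β * (1 - 2 * a)) = 1 - a) :
    longDensity β a (1 - a) = 0 := by
  rw [longDensity, show β * (1 - a - a) = β * (1 - 2 * a) by ring, h, sub_self]

theorem longDensity_nonneg {β a ρ : ℝ} (ha : 0 ≤ a) (h : a * exp (β * (1 - 2 * a)) = 1 - a)
    (hρ : ρ ∈ Icc a (1 - a)) : 0 ≤ longDensity β a ρ := by
  have := (concaveOn_longDensity β ha).ge_on_segment (mem_univ a) (mem_univ (1 - a))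
    (segment_eq_Icc (hρ.1.trans hρ.2) ▸ hρ)
  rwa [longDensity_self, longDensity_one_sub_self h, min_self] at this

theorem mul_exp_eq_one_sub {β a : ℝ} (ha : a ∈ Ioo (0 : ℝ) (1 / 2))
    (heq : β = 1 / (1 - 2 * a) * log ((1 - a) / a)) :
    a * exp (β * (1 - 2 * a)) = 1 - a := by
  obtain ⟨ha0, ha1⟩ := ha
  have hlog : β * (1 - 2 * a) = log ((1 - a) / a) := by
    rw [heq]
    field_simp [show 1 - 2 * a ≠ 0 by linarith]
  rw [hlog, exp_log (div_pos (by linarith) ha0)]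
  field_simp

/-- With `x = exp (β (1/2 - a) / 2)`, the right side minus the left side is
`a (x² - 1)(x - 1)² / 2`. -/
theorem longDensity_lt_one_sub {β a : ℝ} (ha : 0 < a) (ha1 : a < 1 / 2)
    (h : a * exp (β * (1 - 2 * a)) = 1 - a) :
    longDensity β a ((a + 1 / 2) / 2) < longDensity β a (1 - (a + 1 / 2) / 2) := by
  set x := exp (β * (1 / 2 - a) / 2)
  have hx4 : a * x ^ 4 = 1 - a := by
    rw [← exp_nat_mul, ← h]
    push_cast
    ring_nf
  have hx : 1 < x := by
    by_contra! hx
    have : x ^ 4 ≤ 1 := pow_le_one₀ (exp_pos _).le hx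
    nlinarith
  have hx1 : exp (β * ((a + 1 / 2) / 2 - a)) = x := by
    congr 1
    ring
  have hx3 : exp (β * (1 - (a + 1 / 2) / 2 - a)) = x ^ 3 := by
    rw [← exp_nat_mul]
    push_cast
    ring_nf
  rw [longDensity, longDensity, hx1, hx3]
  nlinarith [mul_pos ha (mul_pos (pow_pos (sub_pos.2 hx) 3) (by linarith : 0 < x + 1))]

theorem stmt_8_general (β ρβ : ℝ) (hρβ : ρβ ∈ Set.Ioo (0:ℝ) (1/2))
    (heq : β = (1 / (1 - 2*ρβ)) * Real.log ((1 - ρβ) / ρβ)) :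
    (∀ ρ ∈ Set.Icc ρβ (1 - ρβ), 0 ≤ ρ - ρβ * Real.exp (β * (ρ - ρβ))) ∧
    (ρβ - ρβ * Real.exp (β * (ρβ - ρβ)) = 0) ∧
    (∃ ρ ∈ Set.Icc ρβ (1 - ρβ),
      ρ - ρβ * Real.exp (β * (ρ - ρβ)) ≠ (1 - ρ) - ρβ * Real.exp (β * ((1 - ρ) - ρβ))) := by
  have hkey := mul_exp_eq_one_sub hρβ heq
  obtain ⟨hρβ0, hρβ1⟩ := hρβ
  refine ⟨fun ρ hρ => longDensity_nonneg hρβ0.le hkey hρ, longDensity_self β ρβ,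
    (ρβ + 1 / 2) / 2, ⟨by linarith, by linarith⟩, ?_⟩
  exact (longDensity_lt_one_sub hρβ0 hρβ1 hkey).ne

/-- For `β > 2`, the long-cycle density `ρ ↦ ρ - ρ_β·exp(β(ρ-ρ_β))` is nonnegative on
`[ρ_β, 1-ρ_β]`, vanishes at `ρ = ρ_β`, and is not symmetric about `ρ = 1/2`. -/
theorem stmt_8 (β ρβ : ℝ) (hβ : 2 < β) (hρβ : ρβ ∈ Set.Ioo (0:ℝ) (1/2))
    (heq : β = (1 / (1 - 2*ρβ)) * Real.log ((1 - ρβ) / ρβ)) :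
    (∀ ρ ∈ Set.Icc ρβ (1 - ρβ), 0 ≤ ρ - ρβ * Real.exp (β * (ρ - ρβ))) ∧
    (ρβ - ρβ * Real.exp (β * (ρβ - ρβ)) = 0) ∧
    (∃ ρ ∈ Set.Icc ρβ (1 - ρβ),
      ρ - ρβ * Real.exp (β * (ρ - ρβ)) ≠ (1 - ρ) - ρβ * Real.exp (β * ((1 - ρ) - ρβ))) :=
  stmt_8_general β ρβ hρβ heq
end
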